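/- arXiv:math-ph/0306066 — 2 statements merged into one kernel-verified Lean document; each statement's English description precedes it below -/
import Mathlib

section
/- For all real numbers x ≥ 0, E > 0, and P > 0, one has 1/(x + E) ≤ 2/(x + P + E) + (8/E) · P³/(x + P)³. -/
/-- Arithmetic inequality underlying the spectral splitting
`(D² + E)⁻¹ ≤ 2(D² + P + E)⁻¹ + (8/E)P³(D² + P)⁻³`. -/
theorem stmt0 (x E P : ℝ) (hx : 0 ≤ x) (hE : 0 < E) (hP : 0 < P) :
    1 / (x + E) ≤ 2 / (x + P + E) + (8 / E) * (P ^ 3 / (x + P) ^ 3) := by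
  have hxE : 0 < x + E := by linarith
  have hxP : 0 < x + P := by linarith
  have hxPE : 0 < x + P + E := by linarith
  rcases le_or_gt P (x + E) with h | h
  · have h1 : 1 / (x + E) ≤ 2 / (x + P + E) := by
      rw [div_le_div_iff₀ hxE hxPE]; nlinarith
    have h2 : 0 ≤ (8 / E) * (P ^ 3 / (x + P) ^ 3) := by positivity
    linarith
  · have hxlt : x < P := by linarith
    have h3 : (x + P) ^ 3 ≤ 8 * P ^ 3 := by
      have : (x + P) ^ 3 ≤ (2 * P) ^ 3 := pow_le_pow_left₀ hxP.le (by linarith) 3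
      nlinarith
    have h4 : 1 / E ≤ (8 / E) * (P ^ 3 / (x + P) ^ 3) := by
      rw [div_mul_div_comm, div_le_div_iff₀ hE (by positivity)]
      nlinarith
    have h5 : 1 / (x + E) ≤ 1 / E := by
      apply one_div_le_one_div_of_le hE; linarith
    have h6 : 0 ≤ 2 / (x + P + E) := by positivity
    linarith
end

section
/- For all real λ > 0, δ ∈ (0,1], and b > 0 with δ = min{λ/b, 1}, the integral over ℝ³ of λ³ / (δ³|p|⁶ + λ²p₃² + λ³) with respect to dp is at most c·λ^{1/2}·max{b, λ} for a universal constant c. -/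
open MeasureTheory Real

/-! Since `δ = λ / max b λ`, the integrand is `(1 + (‖p‖/σ)⁶ + (p₃/τ)²)⁻¹` with `σ² = max b λ`
and `τ² = λ`. Weighted AM–GM with weights `1/5, 1/5, 3/5` bounds it by
`φ (p₁/σ) φ (p₂/σ) ψ (p₃/τ)`, where `φ s = (1 + s⁶)^(-1/5)` and `ψ s = (1 + s²)^(-3/5)` are
integrable on `ℝ` (they decay like `|s|^(-6/5)`). By Fubini and scaling the integral is at most
`σ² τ (∫ φ)² ∫ ψ`. -/

theorem EuclideanSpace.integral_prod_apply {ι : Type*} [Fintype ι] (f : ι → ℝ → ℝ) :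
    ∫ p : EuclideanSpace ℝ ι, ∏ i, f i (p i) = ∏ i, ∫ t, f i t := by
  rw [← (PiLp.volume_preserving_toLp ι).integral_comp
    (MeasurableEquiv.toLp 2 (ι → ℝ)).measurableEmbedding]
  exact integral_fintype_prod_volume_eq_prod f

theorem EuclideanSpace.integrable_prod_apply {ι : Type*} [Fintype ι] {f : ι → ℝ → ℝ}
    (hf : ∀ i, Integrable (f i)) :
    Integrable fun p : EuclideanSpace ℝ ι => ∏ i, f i (p i) := by
  rw [← (PiLp.volume_preserving_toLp ι).integrable_comp_emb
    (MeasurableEquiv.toLp 2 (ι → ℝ)).measurableEmbedding]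
  exact Integrable.fintype_prod hf

theorem one_add_pow_rpow_neg_le {n : ℕ} (hn : Even n) {e : ℝ} (he : 0 ≤ e) (s : ℝ) :
    (1 + s ^ n) ^ (-e) ≤ 2 ^ (n * e) * (1 + ‖s‖) ^ (-(n * e)) := by
  have hpos : 0 < 1 + s ^ n := by linarith [hn.pow_nonneg s]
  have hbound : (1 + ‖s‖) ^ n ≤ 2 ^ n * (1 + s ^ n) := by
    rw [norm_eq_abs, ← hn.pow_abs s]
    calc (1 + |s|) ^ n ≤ 2 ^ (n - 1) * (1 ^ n + |s| ^ n) :=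
          add_pow_le zero_le_one (abs_nonneg s) n
      _ ≤ 2 ^ n * (1 + |s| ^ n) := by
        rw [one_pow]; gcongr
        · norm_num
        · omega
  calc (1 + s ^ n) ^ (-e) = (2 ^ n : ℝ) ^ e * (2 ^ n * (1 + s ^ n)) ^ (-e) := by
        rw [mul_rpow (by positivity) hpos.le, ← mul_assoc, ← rpow_add (by positivity),
          add_neg_cancel, rpow_zero, one_mul]
    _ ≤ (2 ^ n : ℝ) ^ e * ((1 + ‖s‖) ^ n) ^ (-e) :=
        mul_le_mul_of_nonneg_left
          (rpow_le_rpow_of_nonpos (by positivity) hbound (neg_nonpos.mpr he)) (by positivity)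
    _ = 2 ^ (n * e) * (1 + ‖s‖) ^ (-(n * e)) := by
        rw [← rpow_natCast, ← rpow_natCast (1 + ‖s‖), ← rpow_mul zero_le_two,
          ← rpow_mul (by positivity), mul_neg]

theorem integrable_one_add_pow_rpow_neg {n : ℕ} (hn : Even n) {e : ℝ} (he : 0 ≤ e)
    (hne : 1 < n * e) : Integrable fun s : ℝ => (1 + s ^ n) ^ (-e) := by
  refine ((integrable_one_add_norm (E := ℝ) (by simpa using hne)).const_mul (2 ^ (n * e))).mono'
    (Measurable.aestronglyMeasurable (by fun_prop)) (.of_forall fun s => ?_)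
  rw [norm_of_nonneg (rpow_nonneg (by linarith [hn.pow_nonneg s]) _)]
  exact one_add_pow_rpow_neg_le hn he s

theorem inv_one_add_le_mul_rpow_neg {x y z R : ℝ} (hx : |x| ≤ R) (hy : |y| ≤ R) :
    (1 + R ^ 6 + z ^ 2)⁻¹ ≤ (1 + x ^ 6) ^ (-(1 / 5) : ℝ) * (1 + y ^ 6) ^ (-(1 / 5) : ℝ) *
      (1 + z ^ 2) ^ (-(3 / 5) : ℝ) := by
  have hx6 : x ^ 6 ≤ R ^ 6 := by
    rw [← (by decide : Even 6).pow_abs]; exact pow_le_pow_left₀ (abs_nonneg x) hx 6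
  have hy6 : y ^ 6 ≤ R ^ 6 := by
    rw [← (by decide : Even 6).pow_abs]; exact pow_le_pow_left₀ (abs_nonneg y) hy 6
  have amgm := geom_mean_le_arith_mean3_weighted (w₁ := 1 / 5) (w₂ := 1 / 5) (w₃ := 3 / 5)
    (p₁ := 1 + x ^ 6) (p₂ := 1 + y ^ 6) (p₃ := 1 + z ^ 2)
    (by norm_num) (by norm_num) (by norm_num) (by positivity) (by positivity) (by positivity)
    (by norm_num)
  rw [rpow_neg (by positivity), rpow_neg (by positivity), rpow_neg (by positivity), ← mul_inv,
    ← mul_inv]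
  refine inv_anti₀ (by positivity) (amgm.trans ?_)
  linarith [sq_nonneg z, pow_nonneg ((abs_nonneg x).trans hx) 6]

theorem integral_inv_one_add_norm_pow_six_add_sq_le {σ τ : ℝ} (hσ : 0 < σ) (hτ : 0 < τ) :
    ∫ p : EuclideanSpace ℝ (Fin 3), (1 + (‖p‖ / σ) ^ 6 + (p 2 / τ) ^ 2)⁻¹
      ≤ σ ^ 2 * τ * ((∫ s : ℝ, (1 + s ^ 6) ^ (-(1 / 5) : ℝ)) ^ 2 *
        ∫ s : ℝ, (1 + s ^ 2) ^ (-(3 / 5) : ℝ)) := by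
  set φ : ℝ → ℝ := fun s => (1 + s ^ 6) ^ (-(1 / 5) : ℝ)
  set ψ : ℝ → ℝ := fun s => (1 + s ^ 2) ^ (-(3 / 5) : ℝ)
  let f : Fin 3 → ℝ → ℝ :=
    ![fun t => φ (t / σ), fun t => φ (t / σ), fun t => ψ (t / τ)]
  have hφ : Integrable fun t => φ (t / σ) :=
    (integrable_one_add_pow_rpow_neg (by decide) (by norm_num) (by norm_num)).comp_div hσ.ne'
  have hψ : Integrable fun t => ψ (t / τ) :=
    (integrable_one_add_pow_rpow_neg (by decide) (by norm_num) (by norm_num)).comp_div hτ.ne'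
  have hf : ∀ i, Integrable (f i) := by
    intro i; fin_cases i <;> assumption
  have hcoord : ∀ (p : EuclideanSpace ℝ (Fin 3)) i, |p i / σ| ≤ ‖p‖ / σ := fun p i => by
    rw [abs_div, abs_of_pos hσ, ← Real.norm_eq_abs]
    exact div_le_div_of_nonneg_right (PiLp.norm_apply_le p i) hσ.le
  have hscale : ∀ (g : ℝ → ℝ) {a : ℝ}, 0 < a → ∫ t, g (t / a) = a * ∫ s, g s :=
    fun g a ha => by
      rw [Measure.integral_comp_div, abs_of_pos ha, smul_eq_mul]
  calc _ ≤ ∫ p : EuclideanSpace ℝ (Fin 3), ∏ i, f i (p i) := by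
        refine integral_mono_of_nonneg (.of_forall fun p => by positivity)
          (EuclideanSpace.integrable_prod_apply hf) (.of_forall fun p => ?_)
        simp only [Fin.prod_univ_three]
        exact inv_one_add_le_mul_rpow_neg (hcoord p 0) (hcoord p 1)
    _ = (∫ t, φ (t / σ)) * (∫ t, φ (t / σ)) * ∫ t, ψ (t / τ) := by
        rw [EuclideanSpace.integral_prod_apply, Fin.prod_univ_three]; rfl
    _ = σ ^ 2 * τ * ((∫ s, φ s) ^ 2 * ∫ s, ψ s) := by
        rw [hscale φ hσ, hscale ψ hτ]; ring

theorem div_min_div_one_eq_max {a b : ℝ} (ha : 0 < a) (hb : 0 < b) :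
    a / min (a / b) 1 = max b a := by
  rcases le_total a b with h | h
  · rw [min_eq_left ((div_le_one hb).mpr h), max_eq_left h, div_div_cancel₀ ha.ne']
  · rw [min_eq_right ((one_le_div hb).mpr h), div_one, max_eq_right h]

/-- The momentum-space integral bound:
`∫_{ℝ³} λ³/(δ³|p|⁶ + λ²p₃² + λ³) dp ≤ c λ^{1/2} max{b, λ}` for a universal `c`,
where `δ = min{λ/b, 1}`. -/
theorem stmt7 : ∃ c : ℝ, 0 < c ∧
    ∀ (lam δ b : ℝ), 0 < lam → 0 < b → δ = min (lam / b) 1 →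
      (∫ p : EuclideanSpace ℝ (Fin 3),
          lam ^ 3 / (δ ^ 3 * ‖p‖ ^ 6 + lam ^ 2 * (p 2) ^ 2 + lam ^ 3))
        ≤ c * Real.sqrt lam * max b lam := by
  set K :=
    (∫ s : ℝ, (1 + s ^ 6) ^ (-(1 / 5) : ℝ)) ^ 2 * ∫ s : ℝ, (1 + s ^ 2) ^ (-(3 / 5) : ℝ)
  have hK : 0 ≤ K := mul_nonneg (sq_nonneg _) (integral_nonneg fun s => by positivity)
  refine ⟨K + 1, by linarith, fun lam δ b hl hb hδ => ?_⟩
  set M := max b lam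
  have hM : 0 < M := lt_max_of_lt_right hl
  have hδM : δ = lam / M := by
    rw [hδ, ← div_div_cancel₀ (b := min _ _) hl.ne', div_min_div_one_eq_max hl hb]
  have hintegrand : ∀ p : EuclideanSpace ℝ (Fin 3),
      lam ^ 3 / (δ ^ 3 * ‖p‖ ^ 6 + lam ^ 2 * (p 2) ^ 2 + lam ^ 3)
        = (1 + (‖p‖ / √M) ^ 6 + (p 2 / √lam) ^ 2)⁻¹ := fun p => by
    rw [div_pow, div_pow, show √M ^ 6 = M ^ 3 by rw [pow_mul √M 2 3, sq_sqrt hM.le],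
      sq_sqrt hl.le, hδM]
    field_simp
    ring
  calc _ = ∫ p : EuclideanSpace ℝ (Fin 3), (1 + (‖p‖ / √M) ^ 6 + (p 2 / √lam) ^ 2)⁻¹ :=
        integral_congr_ae (.of_forall hintegrand)
    _ ≤ √M ^ 2 * √lam * K :=
        integral_inv_one_add_norm_pow_six_add_sq_le (sqrt_pos.2 hM) (sqrt_pos.2 hl)
    _ ≤ (K + 1) * √lam * M := by
        rw [sq_sqrt hM.le]
        nlinarith [mul_pos (sqrt_pos.2 hl) hM]
end
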